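/- Convergence of the finite-n largest zero (from the proof of Theorem 3.6). Under the regularity and exponential-moment assumptions, suppose z⋆ ∈ (0,1] and f_W′(z⋆) > 0. For each n, the set {z ∈ [0,1] : f_W^(n)(z) = 0} is nonempty (it contains 0) and, by continuity of f_W^(n), its supremum ẑ_n := sup{z ∈ [0,1] : f_W^(n)(z) = 0} is itself a zero of f_W^(n). Then ẑ_n → z⋆ as n → ∞. -/

import Mathlib

open MeasureTheory ProbabilityTheory Filter
open scoped Classical BigOperators NNReal Topology

noncomputable section

namespace DefaultCascade

/-- Binomial probability `b(d,z,ℓ) = C(d,ℓ) z^ℓ (1-z)^(d-ℓ)`. -/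
def bin (d : ℕ) (z : ℝ) (ℓ : ℕ) : ℝ := (d.choose ℓ : ℝ) * z ^ ℓ * (1 - z) ^ (d - ℓ)

/-- Binomial tail `β(d,z,ℓ) = Σ_{r=ℓ}^d b(d,z,r)`. -/
def binTail (d : ℕ) (z : ℝ) (ℓ : ℕ) : ℝ := ∑ r ∈ Finset.Icc ℓ d, bin d z r

/-- Convergence in probability to a constant. -/
def TendstoInProb {Ω : Type*} [MeasurableSpace Ω] (P : Measure Ω)
    (f : ℕ → Ω → ℝ) (c : ℝ) : Prop :=
  ∀ ε : ℝ, 0 < ε → Tendsto (fun n => P {ω | ε ≤ |f n ω - c|}) atTop (nhds 0)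

/-- Convergence in distribution (weak convergence of the laws) to a Borel law `ν` on ℝ. -/
def TendstoInDist {Ω : Type*} [MeasurableSpace Ω] (P : Measure Ω)
    (f : ℕ → Ω → ℝ) (ν : Measure ℝ) : Prop :=
  ∀ g : BoundedContinuousFunction ℝ ℝ,
    Tendsto (fun n => ∫ ω, g (f n ω) ∂P) atTop (nhds (∫ x, g x ∂ν))

/-- Supremum of `g` over the time interval `[0, τ]`. -/
def supTo (g : ℝ → ℝ) (τ : ℝ) : ℝ := sSup (g '' Set.Icc 0 τ)

/-- Data of the balls-and-bins default cascade model: a probability space, in/out degrees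
`dp`/`dm`, deterministic types of the `n` institutions, random thresholds `Θ`, random ball
lifetimes `T`, and threshold distributions `q`. -/
structure Model (X : Type*) where
  (Ω : Type*)
  [mΩ : MeasurableSpace Ω]
  (P : Measure Ω)
  (dp : X → ℕ)
  (dm : X → ℕ)
  (typeOf : (n : ℕ) → Fin n → X)
  (Θ : (n : ℕ) → Fin n → Ω → ℕ)
  (T : (n : ℕ) → Fin n → ℕ → Ω → ℝ)
  (q : ℕ → X → ℕ → ℝ)

attribute [instance] Model.mΩ

variable {X : Type*} (M : Model X)

/-- The probabilistic assumptions of the model: `P` is a probability measure, thresholds and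
lifetimes are measurable, `Θ_i` has distribution `q^(n)_{x_i}` supported on `{0,…,d⁺_{x_i}}`,
lifetimes are exponential(1), and all thresholds and lifetimes are mutually independent. -/
structure Model.Valid {X : Type*} (M : Model X) : Prop where
  isProb : IsProbabilityMeasure M.P
  measΘ : ∀ n (i : Fin n), Measurable (M.Θ n i)
  measT : ∀ n (i : Fin n) (j : ℕ), Measurable (M.T n i j)
  q_nonneg : ∀ n x θ, 0 ≤ M.q n x θ
  Θ_le : ∀ n (i : Fin n) ω, M.Θ n i ω ≤ M.dp (M.typeOf n i)
  Θ_dist : ∀ n (i : Fin n) (θ : ℕ),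
    M.P {ω | M.Θ n i ω = θ} = ENNReal.ofReal (M.q n (M.typeOf n i) θ)
  T_exp : ∀ n (i : Fin n) (j : ℕ) (t : ℝ), 0 ≤ t →
    M.P {ω | t < M.T n i j ω} = ENNReal.ofReal (Real.exp (-t))
  indep : ∀ n, iIndepFun
    (fun k : (Fin n) ⊕ (Fin n × ℕ) =>
      Sum.elim (fun i ω => (M.Θ n i ω : ℝ)) (fun p ω => M.T n p.1 p.2 ω) k) M.P

/-- Number of dead balls of institution `i` at time `t`. -/
def deadCount (n : ℕ) (i : Fin n) (t : ℝ) (ω : M.Ω) : ℕ :=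
  ((Finset.range (M.dp (M.typeOf n i))).filter (fun j => M.T n i j ω ≤ t)).card

/-- Institution `i` is solvent at time `t` iff its dead-ball count is `< Θ_i`. -/
def solvent (n : ℕ) (i : Fin n) (t : ℝ) (ω : M.Ω) : Prop :=
  deadCount M n i t ω < M.Θ n i ω

/-- `S_{x,θ,ℓ}^(n)(t)`: solvent institutions of type `x`, threshold `θ`, exactly `ℓ` dead balls. -/
def Scount (n : ℕ) (x : X) (θ ℓ : ℕ) (t : ℝ) (ω : M.Ω) : ℕ :=
  (Finset.univ.filter (fun i : Fin n =>
    M.typeOf n i = x ∧ M.Θ n i ω = θ ∧ deadCount M n i t ω = ℓ ∧ solvent M n i t ω)).card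

/-- `S_n(t)`: number of solvent institutions at time `t`. -/
def Sn (n : ℕ) (t : ℝ) (ω : M.Ω) : ℕ :=
  (Finset.univ.filter (fun i : Fin n => solvent M n i t ω)).card

/-- `D_n(t) = n − S_n(t)`: number of defaulted institutions at time `t`. -/
def Dn (n : ℕ) (t : ℝ) (ω : M.Ω) : ℕ := n - Sn M n t ω

/-- `D_x^(n)(t)`: number of defaulted institutions of type `x` at time `t`. -/
def Dxcount (n : ℕ) (x : X) (t : ℝ) (ω : M.Ω) : ℕ :=
  (Finset.univ.filter (fun i : Fin n => M.typeOf n i = x ∧ ¬ solvent M n i t ω)).card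

/-- `D_{x,θ}^(n)(t)`: defaulted institutions of type `x` with threshold `θ` at time `t`. -/
def Dxθcount (n : ℕ) (x : X) (θ : ℕ) (t : ℝ) (ω : M.Ω) : ℕ :=
  (Finset.univ.filter (fun i : Fin n =>
    M.typeOf n i = x ∧ M.Θ n i ω = θ ∧ ¬ solvent M n i t ω)).card

/-- `L_n(t)`: total number of alive balls at time `t`. -/
def Ln (n : ℕ) (t : ℝ) (ω : M.Ω) : ℕ :=
  ∑ i : Fin n, (M.dp (M.typeOf n i) - deadCount M n i t ω)

/-- `H⁺_n(t)`: number of alive balls in solvent institutions at time `t`. -/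
def Hn (n : ℕ) (t : ℝ) (ω : M.Ω) : ℕ :=
  ∑ i ∈ Finset.univ.filter (fun i : Fin n => solvent M n i t ω),
    (M.dp (M.typeOf n i) - deadCount M n i t ω)

/-- `I⁺_n(t) = L_n(t) − H⁺_n(t)`. -/
def In' (n : ℕ) (t : ℝ) (ω : M.Ω) : ℕ := Ln M n t ω - Hn M n t ω

/-- `W_n(t) = L_n(t) − Σ_i d⁻_{x_i} 1{i solvent at t}`. -/
def Wn (n : ℕ) (t : ℝ) (ω : M.Ω) : ℝ :=
  (Ln M n t ω : ℝ) -
    ∑ i : Fin n, (if solvent M n i t ω then (M.dm (M.typeOf n i) : ℝ) else 0)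

/-- `τ⋆_n = inf {t ≥ 0 : W_n(t) < 0}`. -/
def tauStar (n : ℕ) (ω : M.Ω) : ℝ := sInf {t : ℝ | 0 ≤ t ∧ Wn M n t ω < 0}

/-- Empirical fraction `μ_x^(n)` of institutions of type `x`. -/
def empμ (n : ℕ) (x : X) : ℝ :=
  ((Finset.univ.filter (fun i : Fin n => M.typeOf n i = x)).card : ℝ) / n

/-- `λ^(n) = Σ_x d⁺_x μ_x^(n)`. -/
def lamn (n : ℕ) : ℝ := ∑' x, (M.dp x : ℝ) * empμ M n x

/-- Finite-`n` function `f_S^(n)`. -/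
def fSn (n : ℕ) (z : ℝ) : ℝ :=
  ∑' x, empμ M n x *
    ∑ θ ∈ Finset.Icc 1 (M.dp x), M.q n x θ * binTail (M.dp x) z (M.dp x - θ + 1)

/-- Finite-`n` function `f_D^(n) = 1 - f_S^(n)`. -/
def fDn (n : ℕ) (z : ℝ) : ℝ := 1 - fSn M n z

/-- Finite-`n` function `f_{H⁺}^(n)`. -/
def fHn (n : ℕ) (z : ℝ) : ℝ :=
  ∑' x, empμ M n x *
    ∑ θ ∈ Finset.Icc 1 (M.dp x), M.q n x θ *
      ∑ ℓ ∈ Finset.Icc (M.dp x - θ + 1) (M.dp x), (ℓ : ℝ) * bin (M.dp x) z ℓ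

/-- Finite-`n` function `f_{I⁺}^(n)(z) = λ^(n) z − f_{H⁺}^(n)(z)`. -/
def fIn (n : ℕ) (z : ℝ) : ℝ := lamn M n * z - fHn M n z

/-- Finite-`n` function `f_W^(n)`. -/
def fWn (n : ℕ) (z : ℝ) : ℝ :=
  lamn M n * z - ∑' x, empμ M n x * (M.dm x : ℝ) *
    ∑ θ ∈ Finset.Icc 1 (M.dp x), M.q n x θ * binTail (M.dp x) z (M.dp x - θ + 1)

/-- `ẑ_n`: the largest zero of `f_W^(n)` in `[0,1]`. -/
def zhat (n : ℕ) : ℝ := sSup {z : ℝ | z ∈ Set.Icc (0:ℝ) 1 ∧ fWn M n z = 0}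

/-- Limit function `f_S`. -/
def fS (μ : X → ℝ) (qq : X → ℕ → ℝ) (z : ℝ) : ℝ :=
  ∑' x, μ x * ∑ θ ∈ Finset.Icc 1 (M.dp x), qq x θ * binTail (M.dp x) z (M.dp x - θ + 1)

/-- Limit function `f_D = 1 − f_S`. -/
def fD (μ : X → ℝ) (qq : X → ℕ → ℝ) (z : ℝ) : ℝ := 1 - fS M μ qq z

/-- Limit function `f_{H⁺}`. -/
def fH (μ : X → ℝ) (qq : X → ℕ → ℝ) (z : ℝ) : ℝ :=
  ∑' x, μ x * ∑ θ ∈ Finset.Icc 1 (M.dp x), qq x θ *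
    ∑ ℓ ∈ Finset.Icc (M.dp x - θ + 1) (M.dp x), (ℓ : ℝ) * bin (M.dp x) z ℓ

/-- Limit function `f_{I⁺}(z) = λ z − f_{H⁺}(z)`. -/
def fI (μ : X → ℝ) (qq : X → ℕ → ℝ) (lam : ℝ) (z : ℝ) : ℝ := lam * z - fH M μ qq z

/-- Limit function `f_W`. -/
def fW (μ : X → ℝ) (qq : X → ℕ → ℝ) (lam : ℝ) (z : ℝ) : ℝ :=
  lam * z - ∑' x, μ x * (M.dm x : ℝ) *
    ∑ θ ∈ Finset.Icc 1 (M.dp x), qq x θ * binTail (M.dp x) z (M.dp x - θ + 1)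

/-- `z⋆`: the largest zero of `f_W` in `[0,1]`. -/
def zstar (μ : X → ℝ) (qq : X → ℕ → ℝ) (lam : ℝ) : ℝ :=
  sSup {z : ℝ | z ∈ Set.Icc (0:ℝ) 1 ∧ fW M μ qq lam z = 0}

/-- The regularity assumptions: `μ^(n) → μ`, `q^(n) → q`, both limits probability
distributions, balanced degrees, and `λ^(n) → λ ∈ (0,∞)`. -/
structure Regular (μ : X → ℝ) (qq : X → ℕ → ℝ) (lam : ℝ) : Prop where
  μ_nonneg : ∀ x, 0 ≤ μ x
  μ_sum : HasSum μ 1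
  q_nonneg : ∀ x θ, 0 ≤ qq x θ
  q_supp : ∀ x θ, M.dp x < θ → qq x θ = 0
  q_sum : ∀ x, ∑ θ ∈ Finset.range (M.dp x + 1), qq x θ = 1
  μ_conv : ∀ x, Tendsto (fun n => empμ M n x) atTop (nhds (μ x))
  q_conv : ∀ x θ, θ ≤ M.dp x → Tendsto (fun n => M.q n x θ) atTop (nhds (qq x θ))
  deg_bal : ∀ n, lamn M n = ∑' x, (M.dm x : ℝ) * empμ M n x
  lam_conv : Tendsto (fun n => lamn M n) atTop (nhds lam)
  lam_pos : 0 < lam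
  lam_sum : HasSum (fun x => (M.dp x : ℝ) * μ x) lam

/-- The exponential-moment assumption. -/
def ExpMoment : Prop :=
  ∀ A : ℝ, 1 < A →
    (∃ C : ℝ, ∀ n, Summable (fun x => empμ M n x * A ^ (M.dp x)) ∧
      ∑' x, empμ M n x * A ^ (M.dp x) ≤ C) ∧
    (∃ C : ℝ, ∀ n, Summable (fun x => empμ M n x * A ^ (M.dm x)) ∧
      ∑' x, empμ M n x * A ^ (M.dm x) ≤ C)

/-- `φ_{x,θ,j}(v) = μ_x q_x(θ) β(d⁺_x, v, j)`. -/
def phiF (μ : X → ℝ) (qq : X → ℕ → ℝ) (x : X) (θ j : ℕ) (v : ℝ) : ℝ :=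
  μ x * qq x θ * binTail (M.dp x) v j

/-- The covariance kernel `σ_{x,θ,s,r}(y)` (with the convention `0` when `r > d⁺_x`). -/
def sigmaSR (μ : X → ℝ) (qq : X → ℕ → ℝ) (x : X) (θ s r : ℕ) (y : ℝ) : ℝ :=
  if r ≤ M.dp x then
    (1/2) * y ^ (s + r) * ∑ j ∈ Finset.Icc r (M.dp x),
      (((j-1).choose (s-1) : ℝ)) * (((j-1).choose (r-1) : ℝ)) *
        ∫ v in y..(1:ℝ), (v - y) ^ (2*j - s - r) * (v ^ (2*j))⁻¹ *
          deriv (phiF M μ qq x θ j) v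
  else 0

/-- System-wide wealth aggregation function `Γ_n^◇(t)` with deterministic losses. -/
def Gamma (Lsoc Ldia : X → ℝ) (Γbar : ℕ → ℝ) (n : ℕ) (t : ℝ) (ω : M.Ω) : ℝ :=
  Γbar n - (∑' x, Lsoc x * (Dxcount M n x t ω : ℝ))
    - ∑' x, Ldia x * ∑ θ ∈ Finset.Icc 1 (M.dp x), ∑ ℓ ∈ Finset.Icc 1 (θ - 1),
        (ℓ : ℝ) * (Scount M n x θ ℓ t ω : ℝ)

/-- `f_{x,D}(z)`. -/
def fxD (μ : X → ℝ) (qq : X → ℕ → ℝ) (x : X) (z : ℝ) : ℝ :=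
  μ x * (1 - ∑ θ ∈ Finset.Icc 1 (M.dp x), qq x θ * binTail (M.dp x) z (M.dp x - θ + 1))

/-- Limit function `f_◇`. -/
def fDia (μ : X → ℝ) (qq : X → ℕ → ℝ) (Lsoc Ldia : X → ℝ) (Γd : ℝ) (z : ℝ) : ℝ :=
  Γd - (∑' x, Lsoc x * fxD M μ qq x z)
    - ∑' x, Ldia x * ∑ θ ∈ Finset.Icc 1 (M.dp x), ∑ ℓ ∈ Finset.Icc 1 (θ - 1),
        (ℓ : ℝ) * (μ x * qq x θ * bin (M.dp x) (1 - z) ℓ)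

/-- `f_{x,D}^(n)(z)`. -/
def fxDn (n : ℕ) (x : X) (z : ℝ) : ℝ :=
  empμ M n x *
    (1 - ∑ θ ∈ Finset.Icc 1 (M.dp x), M.q n x θ * binTail (M.dp x) z (M.dp x - θ + 1))

/-- Finite-`n` function `f_◇^(n)`. -/
def fDian (Lsoc Ldia : X → ℝ) (Γbar : ℕ → ℝ) (n : ℕ) (z : ℝ) : ℝ :=
  Γbar n / n - (∑' x, Lsoc x * fxDn M n x z)
    - ∑' x, Ldia x * ∑ θ ∈ Finset.Icc 1 (M.dp x), ∑ ℓ ∈ Finset.Icc 1 (θ - 1),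
        (ℓ : ℝ) * (empμ M n x * M.q n x θ * bin (M.dp x) (1 - z) ℓ)

/-- `I_x^(n)(t)`: infected links leading to institutions of type `x`. -/
def Ixcount (n : ℕ) (x : X) (t : ℝ) (ω : M.Ω) : ℕ :=
  ∑ θ ∈ Finset.Icc 1 (M.dp x),
    ((θ - 1) * Dxθcount M n x θ t ω + ∑ ℓ ∈ Finset.Icc 1 (θ - 1), ℓ * Scount M n x θ ℓ t ω)

/-- System-wide wealth `Γ_n^◇(t)` with random losses. -/
def GammaR (LD LI : X → ℕ → M.Ω → ℝ) (Γbar : ℕ → ℝ) (n : ℕ) (t : ℝ) (ω : M.Ω) : ℝ :=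
  Γbar n - (∑' x, ∑ i ∈ Finset.range (Dxcount M n x t ω), LD x i ω)
    - ∑' x, ∑ i ∈ Finset.range (Ixcount M n x t ω), LI x i ω

/-- `f_{x,I}^(n)(z)`. -/
def fxIn (n : ℕ) (x : X) (z : ℝ) : ℝ :=
  ∑ θ ∈ Finset.Icc 1 (M.dp x), empμ M n x * M.q n x θ *
    (((θ : ℝ) - 1) - ∑ s ∈ Finset.Icc (M.dp x - θ + 2) (M.dp x), binTail (M.dp x) z s)

/-- Finite-`n` function `f_◇^(n)` for random losses. -/
def fDiaRn (LbarD LbarI : X → ℝ) (Γbar : ℕ → ℝ) (n : ℕ) (z : ℝ) : ℝ :=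
  Γbar n / n - (∑' x, LbarD x * fxDn M n x z) - ∑' x, LbarI x * fxIn M n x z

end DefaultCascade

/-!
The linear parts of `f_W^(n)` converge since `λ^(n) → λ`. The sums over types converge
uniformly on `[0,1]` by a uniform version of Pratt's lemma: they are dominated by
`d⁻_x μ_x^(n)`, which tends to `d⁻_x μ_x` in `ℓ¹` by Scheffé's lemma and the exponential
moment bound. Degree balance gives `f_W^(n)(1) ≥ 0`, hence `f_W(1) ≥ 0`, and since `z⋆` is the
largest zero, `f_W > 0` on `(z⋆, 1]`; so `f_W^(n)` has no zero in `[z⋆ + ε, 1]` for large `n`.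
As `f_W′(z⋆) > 0`, there are points `w` just left of `z⋆` with `f_W(w) < 0`, hence
`f_W^(n)(w) < 0` for large `n`, and the intermediate value theorem yields a zero of `f_W^(n)`
in `[w, 1]`.
-/

namespace DefaultCascade

theorem tendstoUniformlyOn_of_dist_le {ι α β : Type*} [PseudoMetricSpace β] {p : Filter ι}
    {s : Set α} {F : ι → α → β} {f : α → β} {u : ι → ℝ} (hu : Tendsto u p (𝓝 0))
    (hFf : ∀ n, ∀ z ∈ s, dist (f z) (F n z) ≤ u n) : TendstoUniformlyOn F f p s :=
  Metric.tendstoUniformlyOn_iff.2 fun _ hε =>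
    (hu.eventually (gt_mem_nhds hε)).mono fun n hn z hz => (hFf n z hz).trans_lt hn

section LargestZero

open Set

-- `zhat M n` and `zstar M μ qq lam` are `largestZero` of `fWn M n` and `fW M μ qq lam`.
def largestZero (g : ℝ → ℝ) : ℝ := sSup {z : ℝ | z ∈ Icc (0:ℝ) 1 ∧ g z = 0}

variable {f g : ℝ → ℝ} {F : ℕ → ℝ → ℝ}

theorem le_largestZero {z : ℝ} (hz : z ∈ Icc (0:ℝ) 1) (hgz : g z = 0) : z ≤ largestZero g :=
  le_csSup ⟨1, fun _ hy => hy.1.2⟩ ⟨hz, hgz⟩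

theorem largestZero_le {a : ℝ} (ha : 0 ≤ a) (h : ∀ z ∈ Icc (0:ℝ) 1, g z = 0 → z ≤ a) :
    largestZero g ≤ a :=
  Real.sSup_le (fun z hz => h z hz.1 hz.2) ha

theorem largestZero_mem (hg : ContinuousOn g (Icc 0 1)) (hg0 : g 0 = 0) :
    largestZero g ∈ Icc (0:ℝ) 1 ∧ g (largestZero g) = 0 :=
  (hg.preimage_isClosed_of_isClosed isClosed_Icc isClosed_singleton).csSup_mem
    ⟨0, ⟨le_rfl, zero_le_one⟩, hg0⟩ ⟨1, fun _ hy => hy.1.2⟩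

theorem pos_of_largestZero_lt (hg : ContinuousOn g (Icc 0 1)) (hg1 : 0 ≤ g 1) {w : ℝ}
    (hw : largestZero g < w) (hw1 : w ≤ 1) : 0 < g w := by
  have hw0 : 0 ≤ w := (Real.sSup_nonneg fun z hz => hz.1.1).trans hw.le
  by_contra! hneg
  obtain ⟨c, hc, hgc⟩ := intermediate_value_Icc hw1 (hg.mono (Icc_subset_Icc hw0 le_rfl))
    ⟨hneg, hg1⟩
  exact (hw.trans_le hc.1).not_ge (le_largestZero ⟨hw0.trans hc.1, hc.2⟩ hgc)

theorem exists_neg_of_hasDerivAt_pos {z a α : ℝ} (hfz : f z = 0) (hα : 0 < α)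
    (hf : HasDerivAt f α z) (ha : a < z) : ∃ w ∈ Ioo a z, f w < 0 := by
  have hslope : ∀ᶠ w in 𝓝[<] z, 0 < slope f z w :=
    ((hasDerivAt_iff_tendsto_slope.1 hf).eventually (eventually_gt_nhds hα)).filter_mono
      (nhdsWithin_mono z fun _ hw => ne_of_lt hw)
  obtain ⟨w, hw, hwIoo⟩ := (hslope.and (Ioo_mem_nhdsLT ha)).exists
  exact ⟨w, hwIoo, neg_of_slope_pos hwIoo.2 hw hfz⟩

theorem eventually_lt_largestZero (hF : TendstoUniformlyOn F f atTop (Icc 0 1))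
    (hFc : ∀ n, ContinuousOn (F n) (Icc 0 1)) (hF1 : ∀ n, 0 ≤ F n 1)
    (hf0 : f 0 = 0) {α : ℝ} (hα : 0 < α)
    (hf : HasDerivAt f α (largestZero f)) {a : ℝ} (ha : a < largestZero f) :
    ∀ᶠ n in atTop, a < largestZero (F n) := by
  have hfz := largestZero_mem (hF.continuousOn (.of_forall hFc)) hf0
  rcases lt_or_ge a 0 with ha0 | ha0
  · exact .of_forall fun n => ha0.trans_le (Real.sSup_nonneg fun z hz => hz.1.1)
  obtain ⟨w, hw, hfw⟩ := exists_neg_of_hasDerivAt_pos hfz.2 hα hf ha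
  have hwI : w ∈ Icc (0:ℝ) 1 := ⟨ha0.trans hw.1.le, hw.2.le.trans hfz.1.2⟩
  filter_upwards [(hF.tendsto_at hwI).eventually (gt_mem_nhds hfw)] with n hFw
  obtain ⟨c, hc, hFc0⟩ := intermediate_value_Icc hwI.2
    ((hFc n).mono (Icc_subset_Icc hwI.1 le_rfl)) ⟨hFw.le, hF1 n⟩
  exact hw.1.trans_le (hc.1.trans (le_largestZero ⟨hwI.1.trans hc.1, hc.2⟩ hFc0))

theorem eventually_largestZero_lt (hF : TendstoUniformlyOn F f atTop (Icc 0 1))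
    (hFc : ∀ n, ContinuousOn (F n) (Icc 0 1)) (hF1 : ∀ n, 0 ≤ F n 1)
    {b : ℝ} (hb : largestZero f < b) :
    ∀ᶠ n in atTop, largestZero (F n) < b := by
  obtain ⟨t, ht, htb⟩ := exists_between hb
  have hz0 : 0 ≤ largestZero f := Real.sSup_nonneg fun z hz => hz.1.1
  have hlarge : ∀ᶠ n in atTop, largestZero (F n) ≤ t := by
    rcases le_or_gt t 1 with ht1 | ht1
    · have hfc := hF.continuousOn (.of_forall hFc)
      have hf1 : 0 ≤ f 1 := ge_of_tendsto' (hF.tendsto_at ⟨zero_le_one, le_rfl⟩) hF1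
      obtain ⟨m, hm, hmin⟩ := isCompact_Icc.exists_isMinOn ⟨t, le_rfl, ht1⟩
        (hfc.mono (Icc_subset_Icc (hz0.trans ht.le) le_rfl))
      have hfm : 0 < f m := pos_of_largestZero_lt hfc hf1 (ht.trans_le hm.1) hm.2
      filter_upwards [Metric.tendstoUniformlyOn_iff.1 hF _ hfm] with n hn
      refine largestZero_le (hz0.trans ht.le) fun z hz hFz => ?_
      by_contra! hzt
      have hfmz : f m ≤ f z := hmin ⟨hzt.le, hz.2⟩
      have := hn z hz
      rw [hFz, Real.dist_eq, sub_zero] at this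
      exact (le_abs_self (f z)).not_gt (this.trans_le hfmz)
    · exact .of_forall fun n => largestZero_le zero_le_one (fun z hz _ => hz.2) |>.trans ht1.le
  exact hlarge.mono fun n hn => hn.trans_lt htb

theorem tendsto_largestZero (hF : TendstoUniformlyOn F f atTop (Icc 0 1))
    (hFc : ∀ n, ContinuousOn (F n) (Icc 0 1)) (hF1 : ∀ n, 0 ≤ F n 1)
    (hf0 : f 0 = 0) {α : ℝ} (hα : 0 < α)
    (hf : HasDerivAt f α (largestZero f)) :
    Tendsto (fun n => largestZero (F n)) atTop (𝓝 (largestZero f)) :=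
  tendsto_order.2 ⟨fun _ ha => eventually_lt_largestZero hF hFc hF1 hf0 hα hf ha,
    fun _ hb => eventually_largestZero_lt hF hFc hF1 hb⟩

end LargestZero

section SequenceSpace

variable {X : Type*} {a : ℕ → X → ℝ} {a' : X → ℝ}

theorem summable_and_tsum_le_of_tendsto (ha0 : ∀ n x, 0 ≤ a n x)
    (ha : ∀ x, Tendsto (a · x) atTop (𝓝 (a' x))) {C : ℝ}
    (hC : ∀ n, Summable (a n) ∧ ∑' x, a n x ≤ C) : Summable a' ∧ ∑' x, a' x ≤ C := by
  have hsum : ∀ s : Finset X, ∑ x ∈ s, a' x ≤ C := fun s =>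
    le_of_tendsto' (tendsto_finsetSum s fun x _ => ha x) fun n =>
      ((hC n).1.sum_le_tsum s fun x _ => ha0 n x).trans (hC n).2
  have hS : Summable a' :=
    summable_of_sum_le (fun x => ge_of_tendsto' (ha x) fun n => ha0 n x) hsum
  exact ⟨hS, hS.tsum_le_of_sum_le hsum⟩

-- Scheffé's lemma: `|u - v| = u + v - 2 min u v`, and `∑ min (a n) a' → ∑ a'` by dominated
-- convergence.
theorem tendsto_tsum_abs_sub_of_tendsto_tsum (ha0 : ∀ n x, 0 ≤ a n x)
    (hs : ∀ n, Summable (a n)) (hs' : Summable a')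
    (ha : ∀ x, Tendsto (a · x) atTop (𝓝 (a' x)))
    (hsum : Tendsto (fun n => ∑' x, a n x) atTop (𝓝 (∑' x, a' x))) :
    Tendsto (fun n => ∑' x, |a n x - a' x|) atTop (𝓝 0) := by
  have ha'0 : ∀ x, 0 ≤ a' x := fun x => ge_of_tendsto' (ha x) fun n => ha0 n x
  have hmin : ∀ n, Summable (fun x => min (a n x) (a' x)) := fun n =>
    hs'.of_nonneg_of_le (fun x => le_min (ha0 n x) (ha'0 x)) fun x => min_le_right _ _
  have hmin_lim : Tendsto (fun n => ∑' x, min (a n x) (a' x)) atTop (𝓝 (∑' x, a' x)) := by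
    refine tendsto_tsum_of_dominated_convergence hs' (fun x => ?_) (.of_forall fun n x => ?_)
    · simpa using (ha x).min (tendsto_const_nhds (x := a' x))
    · rw [Real.norm_of_nonneg (le_min (ha0 n x) (ha'0 x))]
      exact min_le_right _ _
  have hid : ∀ n, ∑' x, |a n x - a' x|
      = ∑' x, a n x + ∑' x, a' x - 2 * ∑' x, min (a n x) (a' x) := fun n => by
    rw [← (hs n).tsum_add hs', ← tsum_mul_left, ← ((hs n).add hs').tsum_sub ((hmin n).mul_left 2)]
    refine tsum_congr fun x => ?_
    rcases le_total (a n x) (a' x) with h | h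
    · rw [abs_of_nonpos (by linarith), min_eq_left h]; ring
    · rw [abs_of_nonneg (by linarith), min_eq_right h]; ring
  simp_rw [hid]
  convert (hsum.add (tendsto_const_nhds (x := ∑' x, a' x))).sub (hmin_lim.const_mul 2) using 2
  ring

theorem natCast_le_add_four_pow_div (d K : ℕ) : (d : ℝ) ≤ K + 4 ^ d / 2 ^ K := by
  rcases le_total d K with h | h
  · have : (0 : ℝ) ≤ 4 ^ d / 2 ^ K := by positivity
    have : (d : ℝ) ≤ K := by exact_mod_cast h
    linarith
  · have hd : (d : ℝ) < 2 ^ d := by exact_mod_cast Nat.lt_two_pow_self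
    have hK : (2 : ℝ) ^ K ≤ 2 ^ d := pow_le_pow_right₀ one_le_two h
    have h4 : (2 : ℝ) ^ d ≤ 4 ^ d / 2 ^ K := by
      rw [le_div_iff₀ (by positivity), show (4 : ℝ) ^ d = 2 ^ d * 2 ^ d by
        rw [← mul_pow]; norm_num]
      gcongr
    linarith [(Nat.cast_nonneg K : (0 : ℝ) ≤ K)]

-- Weights `w ≤ K` cost a factor `K` on the `ℓ¹` distance; heavier weights are controlled by
-- the moment bound, since `w ≤ K + 4^w / 2^K`.
theorem tsum_mul_abs_sub_le_of_moment (ha0 : ∀ n x, 0 ≤ a n x) (ha'0 : ∀ x, 0 ≤ a' x)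
    (hs : ∀ n, Summable (a n)) (hs' : Summable a') (w : X → ℕ) {C : ℝ}
    (hC : ∀ n, Summable (fun x => a n x * 4 ^ w x) ∧ ∑' x, a n x * 4 ^ w x ≤ C)
    (hC' : Summable (fun x => a' x * 4 ^ w x) ∧ ∑' x, a' x * 4 ^ w x ≤ C) (K n : ℕ) :
    ∑' x, (w x : ℝ) * |a n x - a' x| ≤ K * ∑' x, |a n x - a' x| + 2 * C / 2 ^ K := by
  have habs : Summable (fun x => |a n x - a' x|) := ((hs n).sub hs').abs
  have hmom : Summable (fun x => a n x * 4 ^ w x + a' x * 4 ^ w x) := (hC n).1.add hC'.1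
  have hpt : ∀ x, (w x : ℝ) * |a n x - a' x|
      ≤ K * |a n x - a' x| + (a n x * 4 ^ w x + a' x * 4 ^ w x) / 2 ^ K := fun x => by
    have hle : |a n x - a' x| ≤ a n x + a' x :=
      abs_sub_le_of_nonneg_of_le (ha0 n x) (le_add_of_nonneg_right (ha'0 x)) (ha'0 x)
        (le_add_of_nonneg_left (ha0 n x))
    calc (w x : ℝ) * |a n x - a' x| ≤ (K + 4 ^ w x / 2 ^ K) * |a n x - a' x| :=
          mul_le_mul_of_nonneg_right (natCast_le_add_four_pow_div _ _) (abs_nonneg _)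
      _ ≤ K * |a n x - a' x| + 4 ^ w x / 2 ^ K * (a n x + a' x) := by
          rw [add_mul]; gcongr
      _ = K * |a n x - a' x| + (a n x * 4 ^ w x + a' x * 4 ^ w x) / 2 ^ K := by ring
  have hS := (habs.mul_left (K : ℝ)).add (hmom.div_const (2 ^ K))
  calc ∑' x, (w x : ℝ) * |a n x - a' x|
      ≤ ∑' x, (K * |a n x - a' x| + (a n x * 4 ^ w x + a' x * 4 ^ w x) / 2 ^ K) :=
        (hS.of_nonneg_of_le (fun x => by positivity) hpt).tsum_le_tsum hpt hS
    _ = K * ∑' x, |a n x - a' x| + (∑' x, a n x * 4 ^ w x + ∑' x, a' x * 4 ^ w x) / 2 ^ K := by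
        rw [(habs.mul_left _).tsum_add (hmom.div_const _), tsum_mul_left, tsum_div_const,
          (hC n).1.tsum_add hC'.1]
    _ ≤ K * ∑' x, |a n x - a' x| + 2 * C / 2 ^ K := by
        gcongr
        linarith [(hC n).2, hC'.2]

theorem tendsto_tsum_mul_abs_sub_of_moment (ha0 : ∀ n x, 0 ≤ a n x) (ha'0 : ∀ x, 0 ≤ a' x)
    (hs : ∀ n, Summable (a n)) (hs' : Summable a')
    (hℓ1 : Tendsto (fun n => ∑' x, |a n x - a' x|) atTop (𝓝 0)) (w : X → ℕ) {C : ℝ}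
    (hC : ∀ n, Summable (fun x => a n x * 4 ^ w x) ∧ ∑' x, a n x * 4 ^ w x ≤ C)
    (hC' : Summable (fun x => a' x * 4 ^ w x) ∧ ∑' x, a' x * 4 ^ w x ≤ C) :
    Tendsto (fun n => ∑' x, (w x : ℝ) * |a n x - a' x|) atTop (𝓝 0) := by
  refine tendsto_order.2 ⟨fun b hb => .of_forall fun n =>
    hb.trans_le (tsum_nonneg fun x => by positivity), fun b hb => ?_⟩
  have hgeo : Tendsto (fun K : ℕ => 2 * C / 2 ^ K) atTop (𝓝 0) := by
    simpa [div_eq_mul_inv] using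
      (tendsto_pow_atTop_nhds_zero_of_lt_one (by norm_num : (0 : ℝ) ≤ 2⁻¹)
        (by norm_num)).const_mul (2 * C)
  obtain ⟨K, hK⟩ := (hgeo.eventually (gt_mem_nhds (half_pos hb))).exists
  filter_upwards [(hℓ1.const_mul (K : ℝ)).eventually
    (gt_mem_nhds (by simpa using half_pos hb : (K : ℝ) * 0 < b / 2))] with n hn
  linarith [tsum_mul_abs_sub_le_of_moment ha0 ha'0 hs hs' w hC hC' K n]

theorem abs_sub_le_abs_sub_add_min {u u' b b' h : ℝ} (hu : |u| ≤ b) (hu' : |u'| ≤ b')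
    (huh : |u - u'| ≤ h) : |u - u'| ≤ |b - b'| + min h (2 * b') := by
  have hsum : |u - u'| ≤ b + b' := (abs_sub _ _).trans (add_le_add hu hu')
  rcases le_total h (2 * b') with hle | hle
  · rw [min_eq_left hle]; linarith [abs_nonneg (b - b')]
  · rw [min_eq_right hle]; linarith [le_abs_self (b - b')]

-- Pratt's lemma, uniformly in the parameter: `|g n - g'|` is at most
-- `|B n - B'| + min (h n) (2 B')`, whose sum tends to `0` by dominated convergence.
theorem tendstoUniformlyOn_tsum_of_dominated {ι : Type*} {s : Set ι} {g : ℕ → X → ι → ℝ}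
    {g' : X → ι → ℝ} {B : ℕ → X → ℝ} {B' : X → ℝ} {h : ℕ → X → ℝ}
    (hBs : ∀ n, Summable (B n)) (hB's : Summable B') (hB'0 : ∀ x, 0 ≤ B' x)
    (hB : Tendsto (fun n => ∑' x, |B n x - B' x|) atTop (𝓝 0))
    (hgB : ∀ n x, ∀ z ∈ s, |g n x z| ≤ B n x) (hg'B : ∀ x, ∀ z ∈ s, |g' x z| ≤ B' x)
    (hh0 : ∀ n x, 0 ≤ h n x) (hh : ∀ x, Tendsto (h · x) atTop (𝓝 0))
    (hgh : ∀ n x, ∀ z ∈ s, |g n x z - g' x z| ≤ h n x) :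
    TendstoUniformlyOn (fun n z => ∑' x, g n x z) (fun z => ∑' x, g' x z) atTop s := by
  have hdiff : ∀ n, Summable (fun x => |B n x - B' x|) := fun n => ((hBs n).sub hB's).abs
  have hmin : ∀ n, Summable (fun x => min (h n x) (2 * B' x)) := fun n =>
    (hB's.mul_left 2).of_nonneg_of_le (fun x => le_min (hh0 n x) (by linarith [hB'0 x]))
      fun x => min_le_right _ _
  have hmin_lim : Tendsto (fun n => ∑' x, min (h n x) (2 * B' x)) atTop (𝓝 0) := by
    simpa using tendsto_tsum_of_dominated_convergence (f := fun n x => min (h n x) (2 * B' x))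
      (g := fun _ => (0 : ℝ)) (hB's.mul_left 2)
      (fun x => by
        simpa [min_eq_left (by linarith [hB'0 x] : (0 : ℝ) ≤ 2 * B' x)] using
          (hh x).min (tendsto_const_nhds (x := 2 * B' x)))
      (.of_forall fun n x => by
        rw [Real.norm_of_nonneg (le_min (hh0 n x) (by linarith [hB'0 x]))]
        exact min_le_right _ _)
  have hu : Tendsto (fun n => ∑' x, (|B n x - B' x| + min (h n x) (2 * B' x))) atTop (𝓝 0) := by
    simp_rw [fun n => (hdiff n).tsum_add (hmin n)]
    simpa using hB.add hmin_lim
  refine tendstoUniformlyOn_of_dist_le hu fun n z hz => ?_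
  have hpt : ∀ x, |g n x z - g' x z| ≤ |B n x - B' x| + min (h n x) (2 * B' x) := fun x =>
    abs_sub_le_abs_sub_add_min (hgB n x z hz) (hg'B x z hz) (hgh n x z hz)
  have hS : Summable (fun x => |g n x z - g' x z|) :=
    ((hdiff n).add (hmin n)).of_nonneg_of_le (fun _ => abs_nonneg _) hpt
  have hgs : Summable (g n · z) :=
    (hBs n).of_norm_bounded fun x => (Real.norm_eq_abs _).trans_le (hgB n x z hz)
  have hg's : Summable (g' · z) :=
    hB's.of_norm_bounded fun x => (Real.norm_eq_abs _).trans_le (hg'B x z hz)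
  rw [Real.dist_eq, abs_sub_comm, ← hgs.tsum_sub hg's]
  calc |∑' x, (g n x z - g' x z)| ≤ ∑' x, |g n x z - g' x z| := by
        simpa only [Real.norm_eq_abs] using norm_tsum_le_tsum_norm (f := fun x => g n x z - g' x z)
          (by simpa only [Real.norm_eq_abs] using hS)
    _ ≤ _ := hS.tsum_le_tsum hpt ((hdiff n).add (hmin n))

end SequenceSpace

open Finset

section Binomial

variable {d ℓ : ℕ} {z : ℝ}

theorem bin_nonneg (hz : z ∈ Set.Icc (0:ℝ) 1) : 0 ≤ bin d z ℓ := by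
  have h0 := hz.1
  have h1 : 0 ≤ 1 - z := sub_nonneg.2 hz.2
  unfold bin
  positivity

theorem sum_range_bin (d : ℕ) (z : ℝ) : ∑ r ∈ range (d + 1), bin d z r = 1 := by
  simpa [bin, mul_comm, mul_left_comm, mul_assoc] using (add_pow z (1 - z) d).symm

theorem binTail_nonneg (hz : z ∈ Set.Icc (0:ℝ) 1) : 0 ≤ binTail d z ℓ :=
  sum_nonneg fun _ _ => bin_nonneg hz

theorem binTail_le_one (hz : z ∈ Set.Icc (0:ℝ) 1) : binTail d z ℓ ≤ 1 :=
  sum_range_bin d z ▸ sum_le_sum_of_subset_of_nonneg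
    (fun r hr => by simp only [mem_Icc, mem_range] at hr ⊢; omega) fun _ _ _ => bin_nonneg hz

theorem binTail_zero (hℓ : ℓ ≠ 0) : binTail d 0 ℓ = 0 :=
  sum_eq_zero fun r hr => by
    simp [bin, zero_pow (by simp only [mem_Icc] at hr; omega : r ≠ 0)]

theorem continuous_binTail (d ℓ : ℕ) : Continuous (binTail d · ℓ) := by
  unfold binTail bin
  fun_prop

end Binomial

-- `solventProb d q z` is the probability that an institution with `d` balls and threshold law
-- `q` is solvent when each ball is alive with probability `z`: with threshold `θ` it needs
-- at least `d - θ + 1` live balls, and threshold `0` means default from the start.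
def solventProb (d : ℕ) (q : ℕ → ℝ) (z : ℝ) : ℝ :=
  ∑ θ ∈ Icc 1 d, q θ * binTail d z (d - θ + 1)

section SolventProb

variable {d : ℕ} {q q' : ℕ → ℝ} {z : ℝ}

theorem solventProb_nonneg (hq : ∀ θ, 0 ≤ q θ) (hz : z ∈ Set.Icc (0:ℝ) 1) :
    0 ≤ solventProb d q z :=
  sum_nonneg fun θ _ => mul_nonneg (hq θ) (binTail_nonneg hz)

theorem solventProb_le (hq : ∀ θ, 0 ≤ q θ) (hz : z ∈ Set.Icc (0:ℝ) 1) :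
    solventProb d q z ≤ ∑ θ ∈ Icc 1 d, q θ :=
  sum_le_sum fun θ _ => mul_le_of_le_one_right (hq θ) (binTail_le_one hz)

theorem abs_solventProb_sub_le (hz : z ∈ Set.Icc (0:ℝ) 1) :
    |solventProb d q z - solventProb d q' z| ≤ ∑ θ ∈ Icc 1 d, |q θ - q' θ| := by
  rw [solventProb, solventProb, ← sum_sub_distrib]
  refine (abs_sum_le_sum_abs _ _).trans (sum_le_sum fun θ _ => ?_)
  rw [← sub_mul, abs_mul, abs_of_nonneg (binTail_nonneg hz)]
  exact mul_le_of_le_one_right (abs_nonneg _) (binTail_le_one hz)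

theorem solventProb_zero : solventProb d q 0 = 0 :=
  sum_eq_zero fun θ _ => by rw [binTail_zero (by omega), mul_zero]

@[fun_prop]
theorem continuous_solventProb : Continuous (solventProb d q) :=
  continuous_finsetSum _ fun _ _ => continuous_const.mul (continuous_binTail _ _)

end SolventProb

section Empirical

variable {X : Type*} (M : Model X)

theorem empμ_nonneg (n : ℕ) (x : X) : 0 ≤ empμ M n x := by
  unfold empμ
  positivity

theorem empμ_eq_zero {n : ℕ} {x : X} (hx : x ∉ univ.image (M.typeOf n)) : empμ M n x = 0 := by
  rw [empμ, filter_false_of_mem fun i _ hi => hx (mem_image.2 ⟨i, mem_univ i, hi⟩), card_empty,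
    Nat.cast_zero, zero_div]

theorem summable_empμ_mul (n : ℕ) (g : X → ℝ) : Summable (fun x => empμ M n x * g x) :=
  summable_of_ne_finset_zero fun x hx => by rw [empμ_eq_zero M hx, zero_mul]

theorem tsum_empμ_mul (n : ℕ) (g : X → ℝ) :
    ∑' x, empμ M n x * g x = (∑ i, g (M.typeOf n i)) / n := by
  classical
  rw [tsum_eq_sum (s := univ.image (M.typeOf n)) fun x hx => by rw [empμ_eq_zero M hx, zero_mul],
    sum_comp, sum_div]
  refine sum_congr rfl fun x _ => ?_
  rw [empμ, nsmul_eq_mul]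
  ring

theorem tsum_empμ {n : ℕ} (hn : n ≠ 0) : ∑' x, empμ M n x = 1 := by
  simpa [hn] using tsum_empμ_mul M n fun _ => 1

end Empirical

section FiniteSystem

variable {X : Type*} {M : Model X}

theorem Model.Valid.sum_q_le_one (hM : M.Valid) {n : ℕ} (i : Fin n) :
    ∑ θ ∈ Icc 1 (M.dp (M.typeOf n i)), M.q n (M.typeOf n i) θ ≤ 1 := by
  have := hM.isProb
  have hP : ∑ θ ∈ Icc 1 (M.dp (M.typeOf n i)), M.P (M.Θ n i ⁻¹' {θ}) ≤ 1 := by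
    rw [sum_measure_preimage_singleton _ fun θ _ => hM.measΘ n i (measurableSet_singleton θ)]
    exact prob_le_one
  simp_rw [Set.preimage, Set.mem_singleton_iff, hM.Θ_dist,
    ← ENNReal.ofReal_sum_of_nonneg fun θ _ => hM.q_nonneg n _ θ] at hP
  exact ENNReal.ofReal_le_one.1 hP

theorem Model.Valid.empμ_mul_solventProb_le (hM : M.Valid) (n : ℕ) (x : X) {z : ℝ}
    (hz : z ∈ Set.Icc (0:ℝ) 1) : empμ M n x * solventProb (M.dp x) (M.q n x) z ≤ empμ M n x := by
  by_cases hx : x ∈ univ.image (M.typeOf n)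
  · obtain ⟨i, -, rfl⟩ := mem_image.1 hx
    exact mul_le_of_le_one_right (empμ_nonneg M n _)
      ((solventProb_le (hM.q_nonneg n _) hz).trans (hM.sum_q_le_one i))
  · simp [empμ_eq_zero M hx]

theorem fWn_eq (n : ℕ) (z : ℝ) : fWn M n z =
    lamn M n * z - ∑' x, empμ M n x * M.dm x * solventProb (M.dp x) (M.q n x) z := rfl

theorem fWn_zero (n : ℕ) : fWn M n 0 = 0 := by
  simp [fWn_eq, solventProb_zero]

theorem continuous_fWn (n : ℕ) : Continuous (fWn M n) := by
  simp_rw [funext (fWn_eq (M := M) n), mul_assoc, tsum_empμ_mul]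
  fun_prop

theorem Model.Valid.fWn_one_nonneg (hM : M.Valid) {n : ℕ}
    (hbal : lamn M n = ∑' x, (M.dm x : ℝ) * empμ M n x) : 0 ≤ fWn M n 1 := by
  rw [fWn_eq, mul_one, hbal, sub_nonneg]
  simp_rw [mul_right_comm _ (M.dm _ : ℝ), mul_comm (M.dm _ : ℝ) (empμ M n _)]
  refine Summable.tsum_le_tsum (fun x => ?_) ?_ ?_
  · exact mul_le_mul_of_nonneg_right (hM.empμ_mul_solventProb_le n x ⟨zero_le_one, le_rfl⟩)
      (Nat.cast_nonneg _)
  · exact (summable_empμ_mul M n _).congr fun x => (mul_assoc _ _ _).symm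
  · exact summable_empμ_mul M n _

end FiniteSystem

section Limit

variable {X : Type*} {M : Model X} {μ : X → ℝ} {qq : X → ℕ → ℝ} {lam : ℝ}

theorem fW_eq (z : ℝ) : fW M μ qq lam z =
    lam * z - ∑' x, μ x * M.dm x * solventProb (M.dp x) (qq x) z := rfl

theorem fW_zero : fW M μ qq lam 0 = 0 := by
  simp [fW_eq, solventProb_zero]

theorem Regular.solventProb_le_one (hreg : Regular M μ qq lam) (x : X) {z : ℝ}
    (hz : z ∈ Set.Icc (0:ℝ) 1) : solventProb (M.dp x) (qq x) z ≤ 1 :=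
  (solventProb_le (hreg.q_nonneg x) hz).trans <| hreg.q_sum x ▸
    sum_le_sum_of_subset_of_nonneg (fun θ hθ => by simp only [mem_Icc, mem_range] at hθ ⊢; omega)
      fun θ _ _ => hreg.q_nonneg x θ

theorem Regular.exists_moment_bound (hreg : Regular M μ qq lam) (hexp : ExpMoment M) :
    ∃ C, (∀ n, Summable (fun x => empμ M n x * 4 ^ M.dm x) ∧
        ∑' x, empμ M n x * 4 ^ M.dm x ≤ C) ∧
      Summable (fun x => μ x * 4 ^ M.dm x) ∧ ∑' x, μ x * 4 ^ M.dm x ≤ C := by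
  obtain ⟨-, C, hC⟩ := hexp 4 (by norm_num)
  exact ⟨C, hC, summable_and_tsum_le_of_tendsto (fun n x => by positivity [empμ_nonneg M n x])
    (fun x => (hreg.μ_conv x).mul_const _) hC⟩

theorem Regular.summable_mul_dm (hreg : Regular M μ qq lam) (hexp : ExpMoment M) :
    Summable (fun x => μ x * M.dm x) := by
  obtain ⟨C, -, hC', -⟩ := hreg.exists_moment_bound hexp
  refine hC'.of_nonneg_of_le (fun x => mul_nonneg (hreg.μ_nonneg x) (Nat.cast_nonneg _))
    fun x => mul_le_mul_of_nonneg_left ?_ (hreg.μ_nonneg x)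
  simpa using natCast_le_add_four_pow_div (M.dm x) 0

theorem Regular.tendsto_tsum_dm_mul_abs_empμ_sub (hreg : Regular M μ qq lam)
    (hexp : ExpMoment M) :
    Tendsto (fun n => ∑' x, (M.dm x : ℝ) * |empμ M n x - μ x|) atTop (𝓝 0) := by
  have hs : ∀ n, Summable (empμ M n) := fun n => by
    simpa using summable_empμ_mul M n fun _ => 1
  have hℓ1 := tendsto_tsum_abs_sub_of_tendsto_tsum (empμ_nonneg M) hs hreg.μ_sum.summable
    hreg.μ_conv <| by
      rw [hreg.μ_sum.tsum_eq]
      exact tendsto_const_nhds.congr' <| (eventually_ne_atTop 0).mono fun n hn =>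
        (tsum_empμ M hn).symm
  obtain ⟨C, hC, hC'⟩ := hreg.exists_moment_bound hexp
  exact tendsto_tsum_mul_abs_sub_of_moment (empμ_nonneg M) hreg.μ_nonneg hs
    hreg.μ_sum.summable hℓ1 M.dm hC hC'

theorem Regular.abs_empμ_mul_solventProb_sub_le (hreg : Regular M μ qq lam) (n : ℕ) (x : X)
    {z : ℝ} (hz : z ∈ Set.Icc (0:ℝ) 1) :
    |empμ M n x * solventProb (M.dp x) (M.q n x) z - μ x * solventProb (M.dp x) (qq x) z|
      ≤ empμ M n x * ∑ θ ∈ Icc 1 (M.dp x), |M.q n x θ - qq x θ| + |empμ M n x - μ x| := by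
  have hS0 := solventProb_nonneg (d := M.dp x) (hreg.q_nonneg x) hz
  have hS1 := hreg.solventProb_le_one x hz
  calc _ = |empμ M n x * (solventProb (M.dp x) (M.q n x) z - solventProb (M.dp x) (qq x) z)
          + (empμ M n x - μ x) * solventProb (M.dp x) (qq x) z| := by ring_nf
    _ ≤ _ := by
      refine (abs_add_le _ _).trans (add_le_add ?_ ?_)
      · rw [abs_mul, abs_of_nonneg (empμ_nonneg M n x)]
        exact mul_le_mul_of_nonneg_left (abs_solventProb_sub_le hz) (empμ_nonneg M n x)
      · rw [abs_mul, abs_of_nonneg hS0]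
        exact mul_le_of_le_one_right (abs_nonneg _) hS1

theorem Regular.tendsto_dm_mul_discrepancy (hreg : Regular M μ qq lam) (x : X) :
    Tendsto (fun n => (M.dm x : ℝ) *
      (empμ M n x * ∑ θ ∈ Icc 1 (M.dp x), |M.q n x θ - qq x θ| + |empμ M n x - μ x|))
      atTop (𝓝 0) := by
  have hq : Tendsto (fun n => ∑ θ ∈ Icc 1 (M.dp x), |M.q n x θ - qq x θ|) atTop (𝓝 0) := by
    simpa using tendsto_finsetSum _ fun θ hθ =>
      ((hreg.q_conv x θ (mem_Icc.1 hθ).2).sub_const (qq x θ)).abs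
  simpa using (((hreg.μ_conv x).mul hq).add ((hreg.μ_conv x).sub_const (μ x)).abs).const_mul
    (M.dm x : ℝ)

theorem tendstoUniformlyOn_fWn (hM : M.Valid) (hreg : Regular M μ qq lam) (hexp : ExpMoment M) :
    TendstoUniformlyOn (fWn M) (fW M μ qq lam) atTop (Set.Icc 0 1) := by
  have hlin : TendstoUniformlyOn (fun n z => lamn M n * z) (fun z => lam * z) atTop
      (Set.Icc 0 1) := by
    refine tendstoUniformlyOn_of_dist_le (u := fun n => |lamn M n - lam|)
      (by simpa using (hreg.lam_conv.sub_const lam).abs) fun n z hz => ?_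
    rw [Real.dist_eq, ← sub_mul, abs_mul, abs_sub_comm, abs_of_nonneg hz.1]
    exact mul_le_of_le_one_right (abs_nonneg _) hz.2
  have hsum := tendstoUniformlyOn_tsum_of_dominated
    (g := fun n x z => empμ M n x * M.dm x * solventProb (M.dp x) (M.q n x) z)
    (g' := fun x z => μ x * M.dm x * solventProb (M.dp x) (qq x) z)
    (B := fun n x => empμ M n x * M.dm x) (B' := fun x => μ x * M.dm x)
    (h := fun n x => (M.dm x : ℝ) *
      (empμ M n x * ∑ θ ∈ Icc 1 (M.dp x), |M.q n x θ - qq x θ| + |empμ M n x - μ x|))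
    (s := Set.Icc 0 1) (summable_empμ_mul M · _) (hreg.summable_mul_dm hexp)
    (fun x => mul_nonneg (hreg.μ_nonneg x) (Nat.cast_nonneg _))
    ((hreg.tendsto_tsum_dm_mul_abs_empμ_sub hexp).congr fun n => tsum_congr fun x => by
      rw [← sub_mul, abs_mul, Nat.abs_cast, mul_comm])
    (fun n x z hz => by
      rw [mul_right_comm, abs_mul, Nat.abs_cast,
        abs_of_nonneg (mul_nonneg (empμ_nonneg M n x) (solventProb_nonneg (hM.q_nonneg n x) hz))]
      exact mul_le_mul_of_nonneg_right (hM.empμ_mul_solventProb_le n x hz) (Nat.cast_nonneg _))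
    (fun x z hz => by
      rw [mul_right_comm, abs_mul, Nat.abs_cast, abs_mul, abs_of_nonneg (hreg.μ_nonneg x),
        abs_of_nonneg (solventProb_nonneg (hreg.q_nonneg x) hz)]
      exact mul_le_mul_of_nonneg_right (mul_le_of_le_one_right (hreg.μ_nonneg x)
        (hreg.solventProb_le_one x hz)) (Nat.cast_nonneg _))
    (fun n x => by positivity [empμ_nonneg M n x])
    hreg.tendsto_dm_mul_discrepancy
    (fun n x z hz => by
      rw [mul_right_comm, mul_right_comm (μ x), ← sub_mul, abs_mul, Nat.abs_cast, mul_comm]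
      exact mul_le_mul_of_nonneg_left (hreg.abs_empμ_mul_solventProb_sub_le n x hz)
        (Nat.cast_nonneg _))
  exact hlin.fun_sub hsum

end Limit

theorem zhat_converges_general
    {X : Type*} (M : Model X) (hM : M.Valid)
    (μ : X → ℝ) (qq : X → ℕ → ℝ) (lam : ℝ) (hreg : Regular M μ qq lam)
    (hexp : ExpMoment M)
    (α : ℝ) (hα : 0 < α)
    (hderiv : HasDerivAt (fW M μ qq lam) α (zstar M μ qq lam)) :
    (∀ n, fWn M n 0 = 0) ∧
    (∀ n, fWn M n (zhat M n) = 0) ∧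
    Tendsto (fun n => zhat M n) atTop (nhds (zstar M μ qq lam)) := by
  have hcont : ∀ n, ContinuousOn (fWn M n) (Set.Icc 0 1) := fun n =>
    (continuous_fWn n).continuousOn
  exact ⟨fWn_zero, fun n => (largestZero_mem (hcont n) (fWn_zero n)).2,
    tendsto_largestZero (tendstoUniformlyOn_fWn hM hreg hexp) hcont
      (fun n => hM.fWn_one_nonneg (hreg.deg_bal n)) fW_zero hα hderiv⟩

/-- **Convergence of the finite-`n` largest zero** (from the proof of Theorem 3.6).
Under the regularity and exponential-moment assumptions, if `z⋆ ∈ (0,1]` and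
`f_W′(z⋆) > 0`, then for each `n` the set `{z ∈ [0,1] : f_W^(n)(z) = 0}` contains `0`,
its supremum `ẑ_n` is itself a zero of `f_W^(n)`, and `ẑ_n → z⋆` as `n → ∞`. -/
theorem zhat_converges
    {X : Type*} [Countable X] (M : Model X) (hM : M.Valid)
    (μ : X → ℝ) (qq : X → ℕ → ℝ) (lam : ℝ) (hreg : Regular M μ qq lam)
    (hexp : ExpMoment M)
    (hz : zstar M μ qq lam ∈ Set.Ioc (0:ℝ) 1)
    (α : ℝ) (hα : 0 < α)
    (hderiv : HasDerivAt (fW M μ qq lam) α (zstar M μ qq lam)) :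
    (∀ n, fWn M n 0 = 0) ∧
    (∀ n, fWn M n (zhat M n) = 0) ∧
    Tendsto (fun n => zhat M n) atTop (nhds (zstar M μ qq lam)) :=
  zhat_converges_general M hM μ qq lam hreg hexp α hα hderiv

end DefaultCascade
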